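/- With T(M, n) := M - φ(M, n) (φ being the count of positive integers ≤ M with no prime factor ≤ n), for every natural number n ≥ 1: T(n² + 2n, n) - T(n², n) = T(2n, n) + ∑_{d squarefree, d > 1, prime factors ≤ n} (-μ(d))·⌊((n² mod d) + (2n mod d))/d⌋. -/

import Mathlib

open ArithmeticFunction Nat Finset
open scoped ArithmeticFunction.Moebius

/-- Index set: squarefree `d > 1` all of whose prime factors are `≤ n`. -/
def sqfSet (n : ℕ) : Finset ℕ :=
  (Finset.range (primorial n + 1)).filter
    (fun d => 1 < d ∧ Squarefree d ∧ ∀ p ∈ d.primeFactors, p ≤ n)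

/-- The transformed Legendre function `φ_T`. -/
def phiT (M₁ M₂ n : ℕ) : ℤ :=
  -∑ d ∈ sqfSet n, μ d * (((M₁ % d + M₂ % d) / d : ℕ) : ℤ)

/-- Legendre's function: positive integers `≤ M` with no prime factor `≤ n`. -/
def legPhi (M n : ℕ) : ℕ :=
  ((Finset.Icc 1 M).filter (fun m => ∀ p ∈ m.primeFactors, n < p)).card

/-!
Legendre's formula `φ(M, n) = ∑_{d ∣ n#} μ(d) ⌊M/d⌋` gives `T(M, n) = -∑ μ(d) ⌊M/d⌋` over the
divisors `d > 1` of the primorial `n#`, i.e. over `sqfSet n`: the term `d = 1` cancels `M`.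
Splitting `⌊(a + b)/d⌋ = ⌊a/d⌋ + ⌊b/d⌋ + ⌊(a mod d + b mod d)/d⌋` termwise then shows
`T(a + b, n) = T(a, n) + T(b, n) + φ_T(a, b, n)`; take `a = n²`, `b = 2n`.
-/

theorem Nat.add_div_eq_div_add_div_add_mod_add_mod_div (a b d : ℕ) :
    (a + b) / d = a / d + b / d + (a % d + b % d) / d := by
  rcases d.eq_zero_or_pos with rfl | hd
  · simp
  have h : a + b = (a % d + b % d) + d * (a / d + b / d) := by
    linarith [Nat.div_add_mod a d, Nat.div_add_mod b d, Nat.mul_add d (a / d) (b / d)]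
  rw [h, Nat.add_mul_div_left _ _ hd]
  ring

theorem sum_moebius_divisors_eq_ite (k : ℕ) :
    ∑ d ∈ k.divisors, μ d = if k = 1 then 1 else 0 := by
  rw [← coe_mul_zeta_apply, moebius_mul_coe_zeta, ArithmeticFunction.one_apply]

theorem card_filter_coprime_Ioc_eq_sum_moebius {P : ℕ} (hP : P ≠ 0) (M : ℕ) :
    (#{m ∈ Ioc 0 M | Coprime P m} : ℤ) = ∑ d ∈ P.divisors, μ d * ((M / d : ℕ) : ℤ) := by
  calc (#{m ∈ Ioc 0 M | Coprime P m} : ℤ)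
      = ∑ m ∈ Ioc 0 M, ∑ d ∈ P.divisors, if d ∣ m then μ d else 0 := by
        rw [natCast_card_filter]
        refine sum_congr rfl fun m _ => ?_
        have hdiv : {d ∈ P.divisors | d ∣ m} = (P.gcd m).divisors := by
          rw [← Nat.divisors_filter_dvd_of_dvd hP (Nat.gcd_dvd_left P m)]
          exact filter_congr fun d hd => by
            rw [Nat.dvd_gcd_iff, and_iff_right (dvd_of_mem_divisors hd)]
        rw [← sum_filter, hdiv, sum_moebius_divisors_eq_ite]
    _ = ∑ d ∈ P.divisors, μ d * ((M / d : ℕ) : ℤ) := by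
        rw [sum_comm]
        refine sum_congr rfl fun d _ => ?_
        rw [← sum_filter, sum_const, Ioc_filter_dvd_card_eq_div, nsmul_eq_mul, mul_comm]

theorem coprime_primorial_iff {n m : ℕ} (hm : m ≠ 0) :
    Coprime (primorial n) m ↔ ∀ p ∈ m.primeFactors, n < p := by
  rw [← disjoint_primeFactors (primorial_ne_zero n) hm, primeFactors_primorial, disjoint_right]
  refine forall₂_congr fun p hp => ?_
  simp [mem_primesLE, prime_of_mem_primeFactors hp]

theorem legPhi_eq_sum_moebius (M n : ℕ) :
    (legPhi M n : ℤ) = ∑ d ∈ (primorial n).divisors, μ d * ((M / d : ℕ) : ℤ) := by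
  rw [← card_filter_coprime_Ioc_eq_sum_moebius (primorial_ne_zero n), legPhi,
    ← Icc_add_one_left_eq_Ioc]
  congr 2
  exact filter_congr fun m hm =>
    (coprime_primorial_iff (Nat.pos_iff_ne_zero.mp (mem_Icc.1 hm).1)).symm

theorem legPhi_le (M n : ℕ) : legPhi M n ≤ M :=
  (card_filter_le _ _).trans (by simp)

theorem sqfSet_eq_divisors_primorial_erase_one (n : ℕ) :
    sqfSet n = (primorial n).divisors.erase 1 := by
  ext d
  simp only [sqfSet, mem_filter, mem_range, mem_erase, mem_divisors, primorial_ne_zero,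
    ne_eq, not_false_eq_true, and_true]
  constructor
  · rintro ⟨-, hd1, hsq, hle⟩
    refine ⟨hd1.ne', ?_⟩
    rw [← prod_primeFactors_of_squarefree hsq, prod_primeFactors_dvd_iff (primorial_ne_zero n),
      primeFactors_primorial]
    exact fun p hp => mem_primesLE.2 ⟨hle p hp, prime_of_mem_primeFactors hp⟩
  · rintro ⟨hd1, hdvd⟩
    have hd0 : d ≠ 0 := ne_zero_of_dvd_ne_zero (primorial_ne_zero n) hdvd
    refine ⟨lt_succ_of_le (le_of_dvd (primorial_pos n) hdvd), by omega,
      (squarefree_primorial n).squarefree_of_dvd hdvd, fun p hp => le_of_mem_primesLE ?_⟩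
    rw [← primeFactors_primorial]
    exact primeFactors_mono hdvd (primorial_ne_zero n) hp

/-- The paper's `T(M, n)`: the integers in `[1, M]` having a prime factor `≤ n`. -/
def legT (M n : ℕ) : ℕ := M - legPhi M n

theorem legT_eq_neg_sum_moebius (M n : ℕ) :
    (legT M n : ℤ) = -∑ d ∈ sqfSet n, μ d * ((M / d : ℕ) : ℤ) := by
  rw [legT, Nat.cast_sub (legPhi_le M n), legPhi_eq_sum_moebius,
    sqfSet_eq_divisors_primorial_erase_one,
    ← add_sum_erase _ _ (one_mem_divisors.2 (primorial_ne_zero n))]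
  simp

theorem legT_add (M₁ M₂ n : ℕ) :
    (legT (M₁ + M₂) n : ℤ) = legT M₁ n + legT M₂ n + phiT M₁ M₂ n := by
  have hcarry : ∀ d, μ d * (((M₁ + M₂) / d : ℕ) : ℤ) = μ d * ((M₁ / d : ℕ) : ℤ) +
      μ d * ((M₂ / d : ℕ) : ℤ) + μ d * (((M₁ % d + M₂ % d) / d : ℕ) : ℤ) := fun d => by
    rw [add_div_eq_div_add_div_add_mod_add_mod_div]
    push_cast
    ring
  simp only [legT_eq_neg_sum_moebius, phiT, hcarry, sum_add_distrib]
  ring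

theorem stmt_9_general (n : ℕ) :
    (((n ^ 2 + 2 * n) - legPhi (n ^ 2 + 2 * n) n : ℕ) : ℤ) -
        ((n ^ 2 - legPhi (n ^ 2) n : ℕ) : ℤ) =
      ((2 * n - legPhi (2 * n) n : ℕ) : ℤ) +
        ∑ d ∈ sqfSet n, (-μ d) * (((n ^ 2 % d + 2 * n % d) / d : ℕ) : ℤ) := by
  have h := legT_add (n ^ 2) (2 * n) n
  simp only [legT, phiT, neg_mul, sum_neg_distrib] at h ⊢
  linarith

theorem stmt_9 (n : ℕ) (hn : 1 ≤ n) :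
    (((n ^ 2 + 2 * n) - legPhi (n ^ 2 + 2 * n) n : ℕ) : ℤ) -
        ((n ^ 2 - legPhi (n ^ 2) n : ℕ) : ℤ) =
      ((2 * n - legPhi (2 * n) n : ℕ) : ℤ) +
        ∑ d ∈ sqfSet n, (-μ d) * (((n ^ 2 % d + 2 * n % d) / d : ℕ) : ℤ) :=
  stmt_9_general n
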